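/- arXiv:2105.00399 — 4 statements merged into one kernel-verified Lean document; each statement's English description precedes it below -/
import Mathlib

section
/- Let p be a prime number, l a positive integer, and α a type with decidable equality. Let s be a multiset over α with exactly p^l elements that is not homogeneous. Then p divides the number of lists over α whose underlying multiset equals s. -/
/-!
The shift `L ↦ L.rotate 1` permutes the lists with underlying multiset `s`, and its `p ^ l`-th
power is the identity because every such list has length `p ^ l`. A permutation of `p`-power
order fixes some point unless `p` divides the number of points, and a list fixed by the shift is
constant, which is excluded when `s` is not homogeneous.
-/

namespace Multiset

variable {α : Type*} (s : Multiset α)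

instance : Finite {L : List α // (L : Multiset α) = s} := by
  classical
  exact Set.Finite.to_subtype (s := {L : List α | (L : Multiset α) = s}) <|
    s.lists.toFinset.finite_toSet.subset fun L hL => by simp [eq_comm.mp hL]

noncomputable def rotateLists : Equiv.Perm {L : List α // (L : Multiset α) = s} :=
  Equiv.ofBijective (fun L => ⟨L.1.rotate 1, (coe_eq_coe.mpr (L.1.rotate_perm 1)).trans L.2⟩) <|
    Finite.injective_iff_bijective.mp fun _ _ h =>
      Subtype.ext (List.rotate_injective 1 (congrArg Subtype.val h))

@[simp]
theorem coe_rotateLists_apply (L : {L : List α // (L : Multiset α) = s}) :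
    (rotateLists s L : List α) = L.1.rotate 1 :=
  rfl

theorem coe_rotateLists_pow_apply (n : ℕ) (L : {L : List α // (L : Multiset α) = s}) :
    ((rotateLists s ^ n) L : List α) = L.1.rotate n := by
  induction n with
  | zero => simp
  | succ n ih => rw [pow_succ', Equiv.Perm.mul_apply, coe_rotateLists_apply, ih, L.1.rotate_rotate]

theorem rotateLists_pow_card : rotateLists s ^ card s = 1 := by
  ext ⟨L, rfl⟩ : 2
  rw [coe_rotateLists_pow_apply, coe_card, List.rotate_length]
  rfl

theorem rotateLists_apply_eq_self_iff [Nonempty α] {L : {L : List α // (L : Multiset α) = s}} :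
    rotateLists s L = L ↔ ∃ a, s = replicate (card s) a := by
  obtain ⟨L, rfl⟩ := L
  rw [Subtype.ext_iff, coe_rotateLists_apply, List.rotate_one_eq_self_iff_eq_replicate, coe_card]
  simp_rw [← coe_replicate, coe_eq_coe, List.perm_replicate]

end Multiset

theorem prime_dvd_card_lists_of_not_homogeneous_general {α : Type*}
    (p : ℕ) (hp : p.Prime) (l : ℕ) (s : Multiset α)
    (hcard : Multiset.card s = p ^ l)
    (hnothom : ¬ ∃ (n : ℕ) (a : α), s = Multiset.replicate n a) :
    p ∣ Nat.card {L : List α // (L : Multiset α) = s} := by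
  have : Fact p.Prime := ⟨hp⟩
  obtain ⟨a, -⟩ := Multiset.card_pos_iff_exists_mem.mp (hcard ▸ pow_pos hp.pos l)
  have : Nonempty α := ⟨a⟩
  have := Fintype.ofFinite {L : List α // (L : Multiset α) = s}
  rw [Nat.card_eq_fintype_card]
  by_contra hndvd
  obtain ⟨L, hL⟩ :=
    Equiv.Perm.exists_fixed_point_of_prime hndvd (hcard ▸ Multiset.rotateLists_pow_card s)
  exact hnothom ⟨_, (Multiset.rotateLists_apply_eq_self_iff s).mp hL⟩

theorem prime_dvd_card_lists_of_not_homogeneous {α : Type*} [DecidableEq α]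
    (p : ℕ) (hp : p.Prime) (l : ℕ) (hl : 1 ≤ l) (s : Multiset α)
    (hcard : Multiset.card s = p ^ l)
    (hnothom : ¬ ∃ (n : ℕ) (a : α), s = Multiset.replicate n a) :
    p ∣ Nat.card {L : List α // (L : Multiset α) = s} :=
  prime_dvd_card_lists_of_not_homogeneous_general p hp l s hcard hnothom
end

section
/- Let p be a prime number and α a type with decidable equality. Let γ be a multiset over α and suppose E and E' are multisets of multisets over α such that: every member of E and of E' is homogeneous and has a power of p as its number of elements; E and E' each have strictly fewer than p members; and the multiset sums of the members of E and of E' both equal γ. Then E = E'. -/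
private lemma map_pow_sum_zero {p : ℕ} (hp : 2 ≤ p) {K : Multiset ℕ}
    (h : (K.map (p ^ ·)).sum = 0) : K = 0 := by
  by_contra hne
  obtain ⟨k, hk⟩ := Multiset.exists_mem_of_ne_zero hne
  have := (Multiset.sum_eq_zero_iff).mp h (p ^ k) (Multiset.mem_map_of_mem _ hk)
  exact pow_ne_zero k (by omega) this

private lemma exp_decomp {p : ℕ} (hp : 2 ≤ p) (K : Multiset ℕ) (hK : Multiset.card K < p)
    {s : ℕ} (hs : (K.map (p ^ ·)).sum = s) :
    K = Multiset.replicate (s % p) 0 + ((K.filter (· ≠ 0)).map (· - 1)).map (· + 1) ∧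
    ((((K.filter (· ≠ 0)).map (· - 1))).map (p ^ ·)).sum = s / p := by
  set K₁ : Multiset ℕ := (K.filter (· ≠ 0)).map (· - 1) with hK₁
  set t : ℕ := (K₁.map (p ^ ·)).sum with ht
  have hsplit : K.filter (· = 0) + K.filter (fun k => ¬ k = 0) = K :=
    Multiset.filter_add_not _ K
  have hzeros : K.filter (· = 0) = Multiset.replicate (Multiset.count 0 K) 0 := by
    have : K.filter (· = 0) = K.filter (Eq 0) := by
      apply Multiset.filter_congr; intro x _; constructor <;> (intro h; omega)
    rw [this, Multiset.filter_eq]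
  have hnz : K₁.map (· + 1) = K.filter (· ≠ 0) := by
    rw [hK₁, Multiset.map_map]
    conv_rhs => rw [show K.filter (· ≠ 0) = (K.filter (· ≠ 0)).map id from (Multiset.map_id _).symm]
    apply Multiset.map_congr rfl
    intro x hx
    have := Multiset.of_mem_filter hx
    simp only [Function.comp, id]
    omega
  have hc0 : Multiset.count 0 K < p := lt_of_le_of_lt (Multiset.count_le_card 0 K) hK
  have hsum2 : s = Multiset.count 0 K + p * t := by
    rw [← hs]
    conv_lhs => rw [← hsplit]
    rw [Multiset.map_add, Multiset.sum_add, hzeros]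
    congr 1
    · simp [Multiset.map_replicate, Multiset.sum_replicate]
    · rw [ht, ← hnz, Multiset.map_map]
      rw [show ((p ^ ·) ∘ (· + 1) : ℕ → ℕ) = (fun k => p * p ^ k) from by
        funext k; simp only [Function.comp_apply]; ring]
      exact Multiset.sum_map_mul_left
  have hmod : s % p = Multiset.count 0 K := by
    rw [hsum2, Nat.add_mul_mod_self_left, Nat.mod_eq_of_lt hc0]
  have hdiv : s / p = t := by
    rw [hsum2, Nat.add_mul_div_left _ _ (show 0 < p by omega), Nat.div_eq_of_lt hc0]
    omega
  refine ⟨?_, by rw [hdiv]⟩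
  rw [hmod, ← hzeros, hnz]
  conv_lhs => rw [← hsplit]

private lemma exp_unique {p : ℕ} (hp : 2 ≤ p) : ∀ s : ℕ, ∀ K K' : Multiset ℕ,
    Multiset.card K < p → Multiset.card K' < p →
    (K.map (p ^ ·)).sum = s → (K'.map (p ^ ·)).sum = s → K = K' := by
  intro s
  induction s using Nat.strong_induction_on with
  | _ s ih =>
    intro K K' hK hK' hs hs'
    rcases Nat.eq_zero_or_pos s with rfl | hpos
    · rw [map_pow_sum_zero hp hs, map_pow_sum_zero hp hs']
    · obtain ⟨hKeq, hKsum⟩ := exp_decomp hp K hK hs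
      obtain ⟨hK'eq, hK'sum⟩ := exp_decomp hp K' hK' hs'
      have hlt : s / p < s := Nat.div_lt_self hpos (by omega)
      have hcard1 : Multiset.card ((K.filter (· ≠ 0)).map (· - 1)) < p := by
        rw [Multiset.card_map]
        exact lt_of_le_of_lt (Multiset.card_le_card (Multiset.filter_le _ _)) hK
      have hcard2 : Multiset.card ((K'.filter (· ≠ 0)).map (· - 1)) < p := by
        rw [Multiset.card_map]
        exact lt_of_le_of_lt (Multiset.card_le_card (Multiset.filter_le _ _)) hK'
      have := ih (s / p) hlt _ _ hcard1 hcard2 hKsum hK'sum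
      rw [hKeq, hK'eq, this]

private lemma pow_sum_unique {p : ℕ} (hp : 2 ≤ p) (N N' : Multiset ℕ)
    (hN : ∀ n ∈ N, ∃ k, n = p ^ k) (hN' : ∀ n ∈ N', ∃ k, n = p ^ k)
    (hcN : Multiset.card N < p) (hcN' : Multiset.card N' < p)
    (hsum : N.sum = N'.sum) : N = N' := by
  have key : ∀ (M : Multiset ℕ), (∀ n ∈ M, ∃ k, n = p ^ k) →
      (M.map (Nat.log p)).map (p ^ ·) = M := by
    intro M hM
    rw [Multiset.map_map]
    conv_rhs => rw [show M = M.map id from (Multiset.map_id _).symm]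
    apply Multiset.map_congr rfl
    intro n hn
    obtain ⟨k, rfl⟩ := hM n hn
    simp [Function.comp, Nat.log_pow (show 1 < p by omega)]
  have h1 := key N hN
  have h2 := key N' hN'
  have := exp_unique hp N.sum (N.map (Nat.log p)) (N'.map (Nat.log p))
    (by rwa [Multiset.card_map]) (by rwa [Multiset.card_map])
    (by rw [h1]) (by rw [h2, hsum])
  rw [← h1, ← h2, this]

private lemma count_sum_eq {α : Type*} [DecidableEq α] (a : α) :
    ∀ (S : Multiset (Multiset α)), (∀ m ∈ S, Multiset.count a m = Multiset.card m) →
    Multiset.count a S.sum = (S.map Multiset.card).sum := by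
  intro S
  induction S using Multiset.induction with
  | empty => simp
  | cons m s ih =>
    intro h
    rw [Multiset.sum_cons, Multiset.count_add, Multiset.map_cons, Multiset.sum_cons,
      h m (Multiset.mem_cons_self m s), ih (fun m' hm' => h m' (Multiset.mem_cons_of_mem hm'))]

theorem homogeneous_decomposition_unique {α : Type*} [DecidableEq α]
    (p : ℕ) (hp : p.Prime) (γ : Multiset α) (E E' : Multiset (Multiset α))
    (hEhom : ∀ m ∈ E, (∃ (n : ℕ) (a : α), m = Multiset.replicate n a) ∧
      ∃ k : ℕ, Multiset.card m = p ^ k)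
    (hE'hom : ∀ m ∈ E', (∃ (n : ℕ) (a : α), m = Multiset.replicate n a) ∧
      ∃ k : ℕ, Multiset.card m = p ^ k)
    (hEcard : Multiset.card E < p) (hE'card : Multiset.card E' < p)
    (hEsum : E.sum = γ) (hE'sum : E'.sum = γ) :
    E = E' := by
  classical
  have hp2 : 2 ≤ p := hp.two_le
  -- count of a member in F equals count of its card among cards of members containing a
  have hcount : ∀ (F : Multiset (Multiset α)),
      (∀ m ∈ F, (∃ (n : ℕ) (a : α), m = Multiset.replicate n a) ∧
        ∃ k : ℕ, Multiset.card m = p ^ k) →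
      ∀ (n : ℕ) (a : α), n ≠ 0 →
      Multiset.count (Multiset.replicate n a) F =
        Multiset.count n ((F.filter (a ∈ ·)).map Multiset.card) := by
    intro F hF n a hn
    rw [Multiset.count_map, Multiset.filter_filter]
    rw [show Multiset.filter (fun m => n = Multiset.card m ∧ a ∈ m) F
        = Multiset.filter (fun m => Multiset.replicate n a = m) F from ?_]
    · rw [← Multiset.count_eq_card_filter_eq]
    · apply Multiset.filter_congr
      intro m hm
      obtain ⟨⟨n', b, rfl⟩, _⟩ := hF m hm
      constructor
      · rintro ⟨h1, h2⟩
        rw [Multiset.mem_replicate] at h2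
        rw [Multiset.card_replicate] at h1
        rw [h1, h2.2]
      · intro h
        rw [← h]
        exact ⟨by rw [Multiset.card_replicate], Multiset.mem_replicate.mpr ⟨hn, rfl⟩⟩
  -- sum of cards of members containing a equals count of a in the total sum
  have hsum : ∀ (F : Multiset (Multiset α)),
      (∀ m ∈ F, (∃ (n : ℕ) (a : α), m = Multiset.replicate n a) ∧
        ∃ k : ℕ, Multiset.card m = p ^ k) →
      ∀ a : α, ((F.filter (a ∈ ·)).map Multiset.card).sum = Multiset.count a F.sum := by
    intro F hF a
    conv_rhs => rw [← Multiset.filter_add_not (a ∈ ·) F]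
    rw [Multiset.sum_add, Multiset.count_add]
    have h2 : Multiset.count a (Multiset.filter (fun m => ¬ a ∈ m) F).sum = 0 := by
      rw [Multiset.count_eq_zero]
      intro hmem
      obtain ⟨m, hm, ham⟩ := Multiset.mem_join.mp hmem
      exact (Multiset.of_mem_filter hm) ham
    rw [h2, Nat.add_zero]
    refine (count_sum_eq a _ ?_).symm
    intro m hm
    obtain ⟨⟨n', b, rfl⟩, _⟩ := hF m (Multiset.mem_of_mem_filter hm)
    have ham : a ∈ Multiset.replicate n' b := (Multiset.mem_filter.mp hm).2
    rw [Multiset.mem_replicate] at ham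
    rw [ham.2, Multiset.count_replicate, Multiset.card_replicate, if_pos rfl]
  -- main symmetric step
  have main : ∀ (F F' : Multiset (Multiset α)),
      (∀ m ∈ F, (∃ (n : ℕ) (a : α), m = Multiset.replicate n a) ∧
        ∃ k : ℕ, Multiset.card m = p ^ k) →
      (∀ m ∈ F', (∃ (n : ℕ) (a : α), m = Multiset.replicate n a) ∧
        ∃ k : ℕ, Multiset.card m = p ^ k) →
      Multiset.card F < p → Multiset.card F' < p → F.sum = F'.sum →
      ∀ m ∈ F, Multiset.count m F = Multiset.count m F' := by
    intro F F' hF hF' hcF hcF' hFs m hm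
    obtain ⟨⟨n, a, rfl⟩, k, hk⟩ := hF m hm
    rw [Multiset.card_replicate] at hk
    have hn : n ≠ 0 := by rw [hk]; exact pow_ne_zero k (by omega)
    have hNN' : (F.filter (a ∈ ·)).map Multiset.card
        = (F'.filter (a ∈ ·)).map Multiset.card := by
      apply pow_sum_unique hp2
      · intro x hx
        obtain ⟨m', hm', rfl⟩ := Multiset.mem_map.mp hx
        exact (hF m' (Multiset.mem_of_mem_filter hm')).2
      · intro x hx
        obtain ⟨m', hm', rfl⟩ := Multiset.mem_map.mp hx
        exact (hF' m' (Multiset.mem_of_mem_filter hm')).2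
      · rw [Multiset.card_map]
        exact lt_of_le_of_lt (Multiset.card_le_card (Multiset.filter_le _ _)) hcF
      · rw [Multiset.card_map]
        exact lt_of_le_of_lt (Multiset.card_le_card (Multiset.filter_le _ _)) hcF'
      · rw [hsum F hF a, hsum F' hF' a, hFs]
    rw [hcount F hF n a hn, hcount F' hF' n a hn, hNN']
  have hEE' : E.sum = E'.sum := by rw [hEsum, hE'sum]
  ext m
  by_cases hm : m ∈ E
  · exact main E E' hEhom hE'hom hEcard hE'card hEE' m hm
  · by_cases hm' : m ∈ E'
    · exact (main E' E hE'hom hEhom hE'card hEcard hEE'.symm m hm').symm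
    · rw [Multiset.count_eq_zero_of_notMem hm, Multiset.count_eq_zero_of_notMem hm']
end

section
/- Let p be a prime number, l ≥ 1, and set n = p^l. Let α be a type with decidable equality, m a natural number, F a function from (Fin m → α) to the natural numbers, and s : Fin m → Multiset α a family of multisets each having exactly n elements. Call a matrix M : Fin m → Fin n → α admissible if for every i the multiset of entries of the i-th row of M equals s(i), and assume the set of admissible matrices is finite. If for some index i the multiset s(i) is not homogeneous, then p divides the sum, over all admissible matrices M, of the products ∏_{j : Fin n} F(column j of M), where column j of M is the function i ↦ M(i)(j). -/
/-!
Rotating the columns cyclically is an action of a cyclic group of order `n = p ^ l` on the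
admissible matrices which preserves the product over the columns. A matrix fixed by the rotation
has constant rows, which is impossible when `s i` is not homogeneous. Hence every orbit has
`p`-power size greater than one, and summing orbit by orbit shows that `p` divides the sum.
-/

open MulAction

theorem IsPGroup.dvd_sum_of_forall_exists_smul_ne {p : ℕ} [Fact p.Prime]
    {G X R : Type*} [Group G] [MulAction G X] [Fintype X] [Semiring R]
    (hG : IsPGroup p G) (f : X → R) (hf : ∀ (g : G) (x : X), f (g • x) = f x)
    (hfix : ∀ x : X, ∃ g : G, g • x ≠ x) :
    (p : R) ∣ ∑ x, f x := by
  classical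
  rw [← (selfEquivSigmaOrbits G X).symm.sum_comp, Fintype.sum_sigma]
  refine Finset.dvd_sum fun ω _ => ?_
  set b := ω.out
  have horbit : ∀ x : orbit G b, f x = f b := by
    rintro ⟨_, g, rfl⟩
    exact hf g b
  obtain ⟨k, hk⟩ := hG.card_orbit b
  have hk0 : k ≠ 0 := by
    rintro rfl
    obtain ⟨g, hg⟩ := hfix b
    have hsub : (orbit G b).Subsingleton :=
      (Set.subsingleton_coe _).mp (Nat.card_eq_one_iff_unique.mp (hk.trans (pow_zero p))).1
    exact hg (hsub (mem_orbit b g) (mem_orbit_self b))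
  have hsum : ∑ y : orbit G b, f y = (Nat.card (orbit G b) : R) * f b := by
    rw [Finset.sum_congr rfl fun y _ => horbit y, Finset.sum_const, Finset.card_univ,
      Nat.card_eq_fintype_card, nsmul_eq_mul]
  change (p : R) ∣ ∑ y : orbit G b, f y
  rw [hsum, hk, Nat.cast_pow]
  exact (dvd_pow_self _ hk0).mul_right _

theorem IsPGroup.dvd_finsetSum_of_forall_exists_smul_ne {p : ℕ} [Fact p.Prime]
    {G X R : Type*} [Group G] [MulAction G X] [Semiring R]
    (hG : IsPGroup p G) (s : Finset X) (hs : ∀ (g : G), ∀ x ∈ s, g • x ∈ s)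
    (f : X → R) (hf : ∀ (g : G) (x : X), f (g • x) = f x)
    (hfix : ∀ x ∈ s, ∃ g : G, g • x ≠ x) :
    (p : R) ∣ ∑ x ∈ s, f x := by
  let S : SubMulAction G X := ⟨s, fun g _ hx => hs g _ hx⟩
  let : Fintype S := Finset.Subtype.fintype s
  rw [← Finset.sum_coe_sort]
  exact hG.dvd_sum_of_forall_exists_smul_ne (X := S) (fun x => f x) (fun g x => hf g x)
    fun x => (hfix x x.2).imp fun g hg h => hg (congrArg Subtype.val h)

theorem finRotate_pow_self (n : ℕ) : finRotate n ^ n = 1 := by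
  rcases n with _ | _ | n
  · rfl
  · simp [Equiv.Perm.one_def]
  · simpa [isCycle_finRotate.orderOf] using pow_orderOf_eq_one (finRotate (n + 2))

theorem List.ofFn_eq_replicate_of_comp_finRotate {α : Type*} {n : ℕ} [NeZero n]
    {f : Fin n → α} (hf : f ∘ finRotate n = f) : List.ofFn f = List.replicate n (f 0) := by
  have hiter : ∀ k, f ((finRotate n)^[k] 0) = f 0 := fun k => by
    induction k with
    | zero => rfl
    | succ k ih => rw [Function.iterate_succ_apply', ← ih]; exact congrFun hf _
  rw [← List.ofFn_const]
  congr 1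
  funext j
  simpa [← finCycle_eq_finRotate_iterate] using hiter j

-- `G` acts on matrices `ι → κ → α` by permuting the columns: `(g • M) i j = M i (g⁻¹ • j)`.
attribute [local instance] arrowAction

section ColumnAction

variable {G ι κ α : Type*} [Group G] [MulAction G κ]

theorem prod_cols_smul [Fintype κ] {R : Type*} [CommMonoid R] (F : (ι → α) → R) (g : G)
    (M : ι → κ → α) : ∏ j, F (fun i => (g • M) i j) = ∏ j, F (fun i => M i j) :=
  Equiv.prod_comp (MulAction.toPerm g⁻¹) fun j => F fun i => M i j

theorem coe_ofFn_row_smul {n : ℕ} [MulAction G (Fin n)] (g : G) (M : ι → Fin n → α) (i : ι) :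
    ((List.ofFn ((g • M) i) : List α) : Multiset α) = List.ofFn (M i) :=
  Multiset.coe_eq_coe.mpr ((MulAction.toPerm g⁻¹).ofFn_comp_perm (M i))

end ColumnAction

theorem board_sum_vanishes_of_not_homogeneous_general {α : Type*}
    (p : ℕ) (hp : p.Prime) (l : ℕ) (n : ℕ) (hn : n = p ^ l)
    (m : ℕ) (F : (Fin m → α) → ℕ) (s : Fin m → Multiset α)
    (hfin : {M : Fin m → Fin n → α |
      ∀ i, ((List.ofFn (M i) : List α) : Multiset α) = s i}.Finite)
    (i : Fin m) (hnothom : ¬ ∃ (k : ℕ) (a : α), s i = Multiset.replicate k a) :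
    p ∣ ∑ M ∈ hfin.toFinset, ∏ j : Fin n, F (fun i' => M i' j) := by
  have : Fact p.Prime := ⟨hp⟩
  have : NeZero n := ⟨hn ▸ pow_ne_zero l hp.ne_zero⟩
  have hG : IsPGroup p (Subgroup.zpowers (finRotate n)) := .of_card_dvd_pow (n := l) <| by
    rw [Nat.card_zpowers, ← hn]
    exact orderOf_dvd_of_pow_eq_one (finRotate_pow_self n)
  refine Nat.cast_id p ▸
    hG.dvd_finsetSum_of_forall_exists_smul_ne hfin.toFinset ?_ _ (prod_cols_smul F) ?_
  · intro g M hM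
    simpa only [Set.Finite.mem_toFinset, Set.mem_ofPred_eq, coe_ofFn_row_smul] using hM
  · intro M hM
    -- for `g = (finRotate n)⁻¹`, `g • M = M` says that each row is invariant under `finRotate n`
    refine ⟨⟨(finRotate n)⁻¹, inv_mem (Subgroup.mem_zpowers _)⟩,
      fun hfixed => hnothom ⟨n, M i 0, ?_⟩⟩
    rw [← hfin.mem_toFinset.mp hM i, List.ofFn_eq_replicate_of_comp_finRotate (congrFun hfixed i),
      Multiset.coe_replicate]

theorem board_sum_vanishes_of_not_homogeneous {α : Type*} [DecidableEq α]
    (p : ℕ) (hp : p.Prime) (l : ℕ) (hl : 1 ≤ l) (n : ℕ) (hn : n = p ^ l)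
    (m : ℕ) (F : (Fin m → α) → ℕ) (s : Fin m → Multiset α)
    (hcard : ∀ i, Multiset.card (s i) = n)
    (hfin : {M : Fin m → Fin n → α |
      ∀ i, ((List.ofFn (M i) : List α) : Multiset α) = s i}.Finite)
    (i : Fin m) (hnothom : ¬ ∃ (k : ℕ) (a : α), s i = Multiset.replicate k a) :
    p ∣ ∑ M ∈ hfin.toFinset, ∏ j : Fin n, F (fun i' => M i' j) :=
  board_sum_vanishes_of_not_homogeneous_general p hp l n hn m F s hfin i hnothom
end

section
/- Let p be a prime number, l ≥ 1, and set n = p^l. Let α be a type with decidable equality, m a natural number, F a function from (Fin m → α) to the natural numbers, and a : Fin m → α. For each i let s(i) be the homogeneous multiset consisting of n copies of a(i). Call a matrix M : Fin m → Fin n → α admissible if for every i the multiset of entries of the i-th row of M equals s(i), and assume the set of admissible matrices is finite. Then the sum, over all admissible matrices M, of the products ∏_{j : Fin n} F(column j of M) is congruent to F(a) modulo p (where column j of M is the function i ↦ M(i)(j)). -/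
theorem board_sum_homogeneous_congr {α : Type*} [DecidableEq α]
    (p : ℕ) (hp : p.Prime) (l : ℕ) (hl : 1 ≤ l) (n : ℕ) (hn : n = p ^ l)
    (m : ℕ) (F : (Fin m → α) → ℕ) (a : Fin m → α)
    (s : Fin m → Multiset α) (hs : ∀ i, s i = Multiset.replicate n (a i))
    (hfin : {M : Fin m → Fin n → α |
      ∀ i, ((List.ofFn (M i) : List α) : Multiset α) = s i}.Finite) :
    (∑ M ∈ hfin.toFinset, ∏ j : Fin n, F (fun i' => M i' j)) ≡ F a [MOD p] := by
  have hset : hfin.toFinset = ({fun i _ => a i} : Finset (Fin m → Fin n → α)) := by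
    ext M
    simp only [Set.Finite.mem_toFinset, Set.mem_setOf_eq, Finset.mem_singleton]
    constructor
    · intro h
      funext i j
      have := h i
      rw [hs i, ← Multiset.coe_replicate, Multiset.coe_eq_coe] at this
      have hmem : M i j ∈ List.ofFn (M i) := by
        simp [List.mem_ofFn]
      have := (List.Perm.mem_iff this).mp hmem
      simpa [List.eq_of_mem_replicate this]
    · rintro rfl i
      rw [hs i]
      simp [List.ofFn_const, ← Multiset.coe_replicate]
  rw [hset]
  simp only [Finset.sum_singleton, Finset.prod_const, Finset.card_univ, Fintype.card_fin]
  subst hn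
  haveI : Fact p.Prime := ⟨hp⟩
  have key : ((F a : ZMod p)) ^ (p ^ l) = (F a : ZMod p) := ZMod.pow_card_pow _
  have : ((F a ^ p ^ l : ℕ) : ZMod p) = ((F a : ℕ) : ZMod p) := by push_cast; exact key
  exact (ZMod.natCast_eq_natCast_iff _ _ _).mp this
end
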